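/- arXiv:2311.04689 — 4 statements merged into one kernel-verified Lean document; each statement's English description precedes it below -/
import Mathlib

section
/- The complete homogeneous symmetric polynomial admits the power sum expansion h_d = Σ_{π ⊢ d} z_π^{-1} p_π, where the sum is over partitions π of d, p_π = p_{π_1} p_{π_2} ··· p_{π_ℓ} is the product of power sum polynomials, and z_π = Π_{i≥1} i^{m_i} m_i! with m_i the multiplicity of i in π. -/
/-- The complete homogeneous symmetric polynomial of degree `d` in `n` variables,
evaluated at `x`. -/
noncomputable def chs (n d : ℕ) (x : Fin n → ℝ) : ℝ :=
  ∑ s ∈ Finset.univ.sym d, (Multiset.map x (Sym.toMultiset s)).prod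

/-- The power sum symmetric polynomial of degree `k`, evaluated at `x`. -/
def psum (n k : ℕ) (x : Fin n → ℝ) : ℝ := ∑ i, x i ^ k

/-- `z_π = ∏ i^(m_i) m_i!` where `m_i` is the multiplicity of `i` in the partition `π`. -/
def zPart {d : ℕ} (π : Nat.Partition d) : ℕ :=
  ∏ i ∈ π.parts.toFinset, i ^ (π.parts.count i) * (π.parts.count i).factorial

/-! ### Auxiliary definitions -/

/-- `z` as a function of a plain multiset. -/
def zMul (m : Multiset ℕ) : ℕ :=
  ∏ i ∈ m.toFinset, i ^ m.count i * (m.count i).factorial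

lemma zPart_eq {d : ℕ} (π : Nat.Partition d) : zPart π = zMul π.parts := rfl

lemma zMul_pos {m : Multiset ℕ} (hm : ∀ i ∈ m, 0 < i) : 0 < zMul m := by
  apply Finset.prod_pos
  intro i hi
  exact Nat.mul_pos (pow_pos (hm i (Multiset.mem_toFinset.mp hi)) _) (Nat.factorial_pos _)

lemma zMul_cons (k : ℕ) (m : Multiset ℕ) :
    zMul (k ::ₘ m) = (k * (m.count k + 1)) * zMul m := by
  classical
  unfold zMul
  rw [Multiset.toFinset_cons]
  by_cases hk : k ∈ m.toFinset
  · rw [Finset.insert_eq_self.mpr hk]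
    rw [← Finset.mul_prod_erase _ _ hk, ← Finset.mul_prod_erase _ _ hk]
    have hcongr : ∀ i ∈ m.toFinset.erase k,
        i ^ (k ::ₘ m).count i * ((k ::ₘ m).count i).factorial
          = i ^ m.count i * (m.count i).factorial := by
      intro i hi
      rw [Multiset.count_cons_of_ne (Finset.ne_of_mem_erase hi)]
    rw [Finset.prod_congr rfl hcongr, Multiset.count_cons_self, pow_succ,
      Nat.factorial_succ]
    ring
  · have hc : m.count k = 0 := by
      rw [Multiset.count_eq_zero]
      exact fun h => hk (Multiset.mem_toFinset.mpr h)
    rw [Finset.prod_insert hk]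
    have hcongr : ∀ i ∈ m.toFinset,
        i ^ (k ::ₘ m).count i * ((k ::ₘ m).count i).factorial
          = i ^ m.count i * (m.count i).factorial := by
      intro i hi
      have : i ≠ k := fun h => hk (h ▸ hi)
      rw [Multiset.count_cons_of_ne this]
    rw [Finset.prod_congr rfl hcongr, Multiset.count_cons_self, hc]
    simp

/-- Insert a part `k` into a partition of `d - k`. -/
def insPart {d k : ℕ} (hk1 : 0 < k) (hkd : k ≤ d) (π : Nat.Partition (d - k)) :
    Nat.Partition d where
  parts := k ::ₘ π.parts
  parts_pos := by
    intro i hi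
    rcases Multiset.mem_cons.mp hi with h | h
    · exact h ▸ hk1
    · exact π.parts_pos h
  parts_sum := by rw [Multiset.sum_cons, π.parts_sum, Nat.add_sub_cancel' hkd]

/-- Erase a part `k` from a partition of `d`. -/
def ersPart {d : ℕ} (π : Nat.Partition d) (k : ℕ) (hk : k ∈ π.parts) :
    Nat.Partition (d - k) where
  parts := π.parts.erase k
  parts_pos := fun hi => π.parts_pos (Multiset.mem_of_mem_erase hi)
  parts_sum := by
    have h : k + (π.parts.erase k).sum = d := by
      rw [← Multiset.sum_cons, Multiset.cons_erase hk, π.parts_sum]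
    omega

/-- The right-hand side: partition-indexed power sum expansion. -/
noncomputable def Rhs (n d : ℕ) (x : Fin n → ℝ) : ℝ :=
  ∑ π : Nat.Partition d,
    ((zPart π : ℝ))⁻¹ * (Multiset.map (fun k => psum n k x) π.parts).prod

lemma chs_zero (n : ℕ) (x : Fin n → ℝ) : chs n 0 x = 1 := by
  simp only [chs, Finset.sym_zero, Finset.sum_singleton]
  rfl

lemma Rhs_zero (n : ℕ) (x : Fin n → ℝ) : Rhs n 0 x = 1 := by
  rw [Rhs, Finset.univ_unique, Finset.sum_singleton]
  have h : (default : Nat.Partition 0).parts = 0 := Nat.Partition.partition_zero_parts _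
  rw [zPart_eq, h]
  simp [zMul]

/-- Newton-type recursion for the complete homogeneous polynomials. -/
lemma newton_chs (n d : ℕ) (x : Fin n → ℝ) :
    (d : ℝ) * chs n d x = ∑ k ∈ Finset.Icc 1 d, psum n k x * chs n (d - k) x := by
  classical
  have lhs_eq : (d : ℝ) * chs n d x =
      ∑ a ∈ (Finset.univ : Finset (Sym (Fin n) d × Fin n)).sigma
          (fun p => Finset.Icc 1 (p.1.toMultiset.count p.2)),
        (Multiset.map x a.1.1.toMultiset).prod := by
    rw [Finset.sum_sigma]
    rw [chs, Finset.sym_univ, Finset.mul_sum]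
    rw [← Finset.univ_product_univ, Finset.sum_product]
    apply Finset.sum_congr rfl
    intro s _
    have hgen : ∀ m : Multiset (Fin n), ∑ i : Fin n, m.count i = Multiset.card m := by
      intro m
      rw [← Multiset.toFinset_sum_count_eq]
      exact (Finset.sum_subset (Finset.subset_univ _) (fun i _ hi =>
        Multiset.count_eq_zero_of_notMem (fun h => hi (Multiset.mem_toFinset.mpr h)))).symm
    calc (d : ℝ) * (Multiset.map x s.toMultiset).prod
        = ∑ i : Fin n, (s.toMultiset.count i : ℝ) * (Multiset.map x s.toMultiset).prod := by
          rw [← Finset.sum_mul]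
          congr 1
          rw [← Nat.cast_sum, hgen, Sym.card_coe]
      _ = ∑ i : Fin n, ∑ _k ∈ Finset.Icc 1 (s.toMultiset.count i),
            (Multiset.map x s.toMultiset).prod := by
          apply Finset.sum_congr rfl
          intro i _
          rw [Finset.sum_const, Nat.card_Icc]
          simp [nsmul_eq_mul]
  have rhs_eq : ∑ k ∈ Finset.Icc 1 d, psum n k x * chs n (d - k) x =
      ∑ b ∈ (Finset.Icc 1 d).sigma
          (fun k => (Finset.univ : Finset (Fin n × Sym (Fin n) (d - k)))),
        x b.2.1 ^ b.1 * (Multiset.map x b.2.2.toMultiset).prod := by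
    rw [Finset.sum_sigma]
    apply Finset.sum_congr rfl
    intro k _
    rw [psum, chs, Finset.sym_univ, Finset.sum_mul_sum, ← Finset.univ_product_univ,
      Finset.sum_product]
  rw [lhs_eq, rhs_eq]
  refine Finset.sum_bij'
    (fun a ha => ⟨a.2, (a.1.2, ⟨a.1.1.toMultiset - Multiset.replicate a.2 a.1.2, by
      have h2 := (Finset.mem_sigma.mp ha).2
      have hrep : Multiset.replicate a.2 a.1.2 ≤ a.1.1.toMultiset :=
        Multiset.le_count_iff_replicate_le.mp (Finset.mem_Icc.mp h2).2
      rw [Multiset.card_sub hrep, Multiset.card_replicate, Sym.card_coe]⟩)⟩)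
    (fun b hb => ⟨(⟨b.2.2.toMultiset + Multiset.replicate b.1 b.2.1, by
      have h1 := (Finset.mem_sigma.mp hb).1
      have hk := Finset.mem_Icc.mp h1
      rw [Multiset.card_add, Multiset.card_replicate, Sym.card_coe]
      omega⟩, b.2.1), b.1⟩)
    ?_ ?_ ?_ ?_ ?_
  · -- hi
    rintro ⟨⟨s, i⟩, k⟩ ha
    have h2 := (Finset.mem_sigma.mp ha).2
    have hk := Finset.mem_Icc.mp h2
    refine Finset.mem_sigma.mpr ⟨Finset.mem_Icc.mpr ⟨hk.1, ?_⟩, Finset.mem_univ _⟩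
    calc k ≤ s.toMultiset.count i := hk.2
      _ ≤ Multiset.card s.toMultiset := Multiset.count_le_card _ _
      _ = d := Sym.card_coe
  · -- hj
    rintro ⟨k, i, s'⟩ hb
    have h1 := Finset.mem_Icc.mp (Finset.mem_sigma.mp hb).1
    refine Finset.mem_sigma.mpr ⟨Finset.mem_univ _, Finset.mem_Icc.mpr ⟨h1.1, ?_⟩⟩
    show k ≤ Multiset.count i (s'.toMultiset + Multiset.replicate k i)
    rw [Multiset.count_add, Multiset.count_replicate_self]
    omega
  · -- left_inv
    rintro ⟨⟨s, i⟩, k⟩ ha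
    have h2 := (Finset.mem_sigma.mp ha).2
    have hrep : Multiset.replicate k i ≤ s.toMultiset :=
      Multiset.le_count_iff_replicate_le.mp (Finset.mem_Icc.mp h2).2
    exact congrArg (fun t => (⟨(t, i), k⟩ : (_ : Sym (Fin n) d × Fin n) × ℕ))
      (Sym.ext (tsub_add_cancel_of_le hrep))
  · -- right_inv
    rintro ⟨k, i, s'⟩ hb
    have h1 := Finset.mem_Icc.mp (Finset.mem_sigma.mp hb).1
    exact congrArg (fun t => (⟨k, (i, t)⟩ : (j : ℕ) × (Fin n × Sym (Fin n) (d - j))))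
      (Sym.ext (add_tsub_cancel_right _ _))
  · -- weights
    rintro ⟨⟨s, i⟩, k⟩ ha
    have h2 := (Finset.mem_sigma.mp ha).2
    have hrep : Multiset.replicate k i ≤ s.toMultiset :=
      Multiset.le_count_iff_replicate_le.mp (Finset.mem_Icc.mp h2).2
    have key : s.toMultiset = (s.toMultiset - Multiset.replicate k i)
        + Multiset.replicate k i := (tsub_add_cancel_of_le hrep).symm
    show (Multiset.map x s.toMultiset).prod
        = x i ^ k * (Multiset.map x (s.toMultiset - Multiset.replicate k i)).prod
    conv_lhs => rw [key]
    rw [Multiset.map_add, Multiset.prod_add, Multiset.map_replicate, Multiset.prod_replicate]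
    ring

/-- Newton-type recursion for the partition-indexed sum. -/
lemma newton_Rhs (n d : ℕ) (x : Fin n → ℝ) :
    (d : ℝ) * Rhs n d x = ∑ k ∈ Finset.Icc 1 d, psum n k x * Rhs n (d - k) x := by
  classical
  have rhs_eq : ∑ k ∈ Finset.Icc 1 d, psum n k x * Rhs n (d - k) x =
      ∑ a ∈ (Finset.Icc 1 d).sigma
          (fun k => (Finset.univ : Finset (Nat.Partition (d - k)))),
        psum n a.1 x * ((zMul a.2.parts : ℝ)⁻¹
          * (Multiset.map (fun k => psum n k x) a.2.parts).prod) := by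
    rw [Finset.sum_sigma]
    apply Finset.sum_congr rfl
    intro k _
    rw [Rhs, Finset.mul_sum]
    rfl
  have lhs_eq : (d : ℝ) * Rhs n d x =
      ∑ b ∈ (Finset.univ : Finset (Nat.Partition d)).sigma (fun π => π.parts.toFinset),
        ((b.2 * b.1.parts.count b.2 : ℕ) : ℝ) * ((zMul b.1.parts : ℝ)⁻¹
          * (Multiset.map (fun k => psum n k x) b.1.parts).prod) := by
    rw [Finset.sum_sigma]
    rw [Rhs, Finset.mul_sum]
    apply Finset.sum_congr rfl
    intro π _
    have hsum : ∑ i ∈ π.parts.toFinset, ((i * π.parts.count i : ℕ) : ℝ) = (d : ℝ) := by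
      rw [← Nat.cast_sum]
      congr 1
      have h0 := Finset.sum_multiset_map_count π.parts (id : ℕ → ℕ)
      rw [Multiset.map_id] at h0
      calc ∑ i ∈ π.parts.toFinset, i * Multiset.count i π.parts
          = ∑ m ∈ π.parts.toFinset, Multiset.count m π.parts • id m := by
            apply Finset.sum_congr rfl
            intro i _
            simp [mul_comm]
        _ = π.parts.sum := h0.symm
        _ = d := π.parts_sum
    show (d : ℝ) * ((zMul π.parts : ℝ)⁻¹ * (Multiset.map (fun k => psum n k x) π.parts).prod)
        = ∑ i ∈ π.parts.toFinset, ((i * π.parts.count i : ℕ) : ℝ)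
            * ((zMul π.parts : ℝ)⁻¹ * (Multiset.map (fun k => psum n k x) π.parts).prod)
    rw [← Finset.sum_mul, hsum]
  rw [lhs_eq, rhs_eq]
  refine (Finset.sum_bij'
    (fun a ha => (⟨insPart (by
        have := Finset.mem_Icc.mp (Finset.mem_sigma.mp ha).1; omega) (by
        have := Finset.mem_Icc.mp (Finset.mem_sigma.mp ha).1; omega) a.2, a.1⟩ :
      (_ : Nat.Partition d) × ℕ))
    (fun b hb => ⟨b.2, ersPart b.1 b.2 (by
      have := (Finset.mem_sigma.mp hb).2
      exact Multiset.mem_toFinset.mp this)⟩)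
    ?_ ?_ ?_ ?_ ?_).symm
  · -- hi
    rintro ⟨k, π'⟩ ha
    refine Finset.mem_sigma.mpr ⟨Finset.mem_univ _, ?_⟩
    exact Multiset.mem_toFinset.mpr (Multiset.mem_cons_self _ _)
  · -- hj
    rintro ⟨π, k⟩ hb
    have hk : k ∈ π.parts := Multiset.mem_toFinset.mp (Finset.mem_sigma.mp hb).2
    refine Finset.mem_sigma.mpr ⟨Finset.mem_Icc.mpr ⟨π.parts_pos hk, ?_⟩, Finset.mem_univ _⟩
    calc k ≤ π.parts.sum := Multiset.le_sum_of_mem hk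
      _ = d := π.parts_sum
  · -- left_inv
    rintro ⟨k, π'⟩ ha
    refine congrArg (fun t => (⟨k, t⟩ : (j : ℕ) × Nat.Partition (d - j))) ?_
    apply Nat.Partition.ext
    show (k ::ₘ π'.parts).erase k = π'.parts
    exact Multiset.erase_cons_head _ _
  · -- right_inv
    rintro ⟨π, k⟩ hb
    have hk : k ∈ π.parts := Multiset.mem_toFinset.mp (Finset.mem_sigma.mp hb).2
    refine congrArg (fun t => (⟨t, k⟩ : (_ : Nat.Partition d) × ℕ)) ?_
    apply Nat.Partition.ext
    show k ::ₘ π.parts.erase k = π.parts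
    exact Multiset.cons_erase hk
  · -- weights
    rintro ⟨k, π'⟩ ha
    have hk := Finset.mem_Icc.mp (Finset.mem_sigma.mp ha).1
    show psum n k x * ((zMul π'.parts : ℝ)⁻¹
          * (Multiset.map (fun k => psum n k x) π'.parts).prod)
        = ((k * (k ::ₘ π'.parts).count k : ℕ) : ℝ) * ((zMul (k ::ₘ π'.parts) : ℝ)⁻¹
          * (Multiset.map (fun k => psum n k x) (k ::ₘ π'.parts)).prod)
    rw [Multiset.count_cons_self, zMul_cons, Multiset.map_cons, Multiset.prod_cons]
    have hz : (zMul π'.parts : ℝ) ≠ 0 := by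
      have := zMul_pos (fun i hi => π'.parts_pos hi)
      positivity
    have hk0 : (k : ℝ) ≠ 0 := by
      have : 0 < k := hk.1
      positivity
    have hc : ((π'.parts.count k + 1 : ℕ) : ℝ) ≠ 0 := by positivity
    push_cast
    field_simp

theorem chs_eq_sum_powerSums (n d : ℕ) (x : Fin n → ℝ) :
    chs n d x =
      ∑ π : Nat.Partition d,
        ((zPart π : ℝ))⁻¹ * (Multiset.map (fun k => psum n k x) π.parts).prod := by
  have main : ∀ d, chs n d x = Rhs n d x := by
    intro d
    induction d using Nat.strong_induction_on with
    | _ d ih =>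
      rcases Nat.eq_zero_or_pos d with h | h
      · subst h; rw [chs_zero, Rhs_zero]
      · have hd : (d : ℝ) ≠ 0 := by positivity
        have h1 := newton_chs n d x
        have h2 := newton_Rhs n d x
        have h3 : ∑ k ∈ Finset.Icc 1 d, psum n k x * chs n (d - k) x
            = ∑ k ∈ Finset.Icc 1 d, psum n k x * Rhs n (d - k) x := by
          apply Finset.sum_congr rfl
          intro k hk
          have hk' := Finset.mem_Icc.mp hk
          rw [ih (d - k) (by omega)]
        have : (d : ℝ) * chs n d x = (d : ℝ) * Rhs n d x := by rw [h1, h3, ← h2]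
        exact mul_left_cancel₀ hd this
  exact main d
end

section
/- If G is a simple graph with m edges and adjacency matrix A with eigenvalues λ_1,...,λ_n, then h_6(λ_1,...,λ_n) = (1/6) trace(A^6) + (1/4) m · trace(A^4) + (1/18) (trace(A^3))^2 + (1/6) m^3. -/
open Finset

namespace ChsAux

variable {α : Type*} [DecidableEq α]

noncomputable def H (s : Finset α) (d : ℕ) (x : α → ℝ) : ℝ :=
  ∑ t ∈ s.sym d, (Multiset.map x (Sym.toMultiset t)).prod

noncomputable def pk (k : ℕ) (s : Finset α) (x : α → ℝ) : ℝ := ∑ i ∈ s, x i ^ k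

lemma H_zero (s : Finset α) (x : α → ℝ) : H s 0 x = 1 := by
  rw [H, Finset.sym_zero, Finset.sum_singleton]
  rfl

lemma H_empty (d : ℕ) (x : α → ℝ) : H (∅ : Finset α) (d + 1) x = 0 := by
  simp [H, Finset.sym_empty]

lemma pk_empty (k : ℕ) (x : α → ℝ) : pk k (∅ : Finset α) x = 0 := by simp [pk]

lemma pk_insert (k : ℕ) {a : α} {s : Finset α} (h : a ∉ s) (x : α → ℝ) :
    pk k (insert a s) x = x a ^ k + pk k s x := by
  simp [pk, Finset.sum_insert h]

lemma H_insert {a : α} {s : Finset α} (h : a ∉ s) (d : ℕ) (x : α → ℝ) :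
    H (insert a s) d x = ∑ i : Fin (d + 1), x a ^ (i : ℕ) * H s (d - i) x := by
  classical
  rw [H, ← Finset.sum_coe_sort]
  refine (Fintype.sum_equiv (Finset.symInsertEquiv h)
    (fun t => (Multiset.map x (Sym.toMultiset t.1)).prod)
    (fun p => x a ^ (p.1 : ℕ) *
      (Multiset.map x (Sym.toMultiset p.2.1)).prod) ?_).trans ?_
  · intro t
    have hfill := Sym.fill_filterNe a t.1
    set i := (t.1.filterNe a).1 with hi
    set m := (t.1.filterNe a).2 with hm
    conv_lhs => rw [← hfill]
    have hco : (Sym.fill a i m : Multiset α)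
        = (m : Multiset α) + Multiset.replicate (i : ℕ) a := Sym.coe_fill
    rw [hco, Multiset.map_add, Multiset.prod_add, Multiset.map_replicate,
      Multiset.prod_replicate]
    rw [show (Finset.symInsertEquiv h) t = ⟨i, m, _⟩ from rfl]
    ring
  · rw [← Finset.univ_sigma_univ, Finset.sum_sigma]
    refine Finset.sum_congr rfl fun i _ => ?_
    rw [H, Finset.mul_sum]
    exact Finset.sum_coe_sort (s.sym (d - (i : ℕ)))
      (fun t => x a ^ (i : ℕ) * (Multiset.map x (Sym.toMultiset t)).prod)

end ChsAux

namespace ChsAux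

variable {α : Type*} [DecidableEq α]

lemma formulas (x : α → ℝ) (s : Finset α) :
    H s 1 x = pk 1 s x ∧
    H s 2 x = pk 1 s x ^ 2 / 2 + pk 2 s x / 2 ∧
    H s 3 x = pk 1 s x ^ 3 / 6 + pk 1 s x * pk 2 s x / 2 + pk 3 s x / 3 ∧
    H s 4 x = pk 1 s x ^ 4 / 24 + pk 1 s x ^ 2 * pk 2 s x / 4 + pk 2 s x ^ 2 / 8
      + pk 1 s x * pk 3 s x / 3 + pk 4 s x / 4 ∧
    H s 5 x = pk 1 s x ^ 5 / 120 + pk 1 s x ^ 3 * pk 2 s x / 12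
      + pk 1 s x * pk 2 s x ^ 2 / 8 + pk 1 s x ^ 2 * pk 3 s x / 6
      + pk 2 s x * pk 3 s x / 6 + pk 1 s x * pk 4 s x / 4 + pk 5 s x / 5 ∧
    H s 6 x = pk 1 s x ^ 6 / 720 + pk 1 s x ^ 4 * pk 2 s x / 48
      + pk 1 s x ^ 2 * pk 2 s x ^ 2 / 16 + pk 2 s x ^ 3 / 48
      + pk 1 s x ^ 3 * pk 3 s x / 18 + pk 1 s x * pk 2 s x * pk 3 s x / 6
      + pk 3 s x ^ 2 / 18 + pk 1 s x ^ 2 * pk 4 s x / 8 + pk 2 s x * pk 4 s x / 8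
      + pk 1 s x * pk 5 s x / 5 + pk 6 s x / 6 := by
  classical
  induction s using Finset.induction_on with
  | empty => simp [H_empty, pk_empty]
  | insert _ _ ha =>
    rename_i a s ih
    obtain ⟨h1, h2, h3, h4, h5, h6⟩ := ih
    rw [pk_insert 1 ha, pk_insert 2 ha, pk_insert 3 ha, pk_insert 4 ha,
      pk_insert 5 ha, pk_insert 6 ha]
    refine ⟨?_, ?_, ?_, ?_, ?_, ?_⟩
    · rw [H_insert ha, Fin.sum_univ_two]
      norm_num [H_zero, h1]
      ring
    · rw [H_insert ha, Fin.sum_univ_three]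
      norm_num [H_zero, h1, h2]
      ring
    · rw [H_insert ha, Fin.sum_univ_four]
      norm_num [H_zero, h1, h2, h3, show ((3 : Fin 4) : ℕ) = 3 from rfl]
      ring
    · rw [H_insert ha, Fin.sum_univ_five]
      norm_num [H_zero, h1, h2, h3, h4, show ((3 : Fin 5) : ℕ) = 3 from rfl,
        show ((4 : Fin 5) : ℕ) = 4 from rfl]
      ring
    · rw [H_insert ha, Fin.sum_univ_six]
      norm_num [H_zero, h1, h2, h3, h4, h5, show ((3 : Fin 6) : ℕ) = 3 from rfl,
        show ((4 : Fin 6) : ℕ) = 4 from rfl, show ((5 : Fin 6) : ℕ) = 5 from rfl]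
      ring
    · rw [H_insert ha, Fin.sum_univ_seven]
      norm_num [H_zero, h1, h2, h3, h4, h5, h6, show ((3 : Fin 7) : ℕ) = 3 from rfl,
        show ((4 : Fin 7) : ℕ) = 4 from rfl, show ((5 : Fin 7) : ℕ) = 5 from rfl,
        show ((6 : Fin 7) : ℕ) = 6 from rfl]
      ring


lemma trace_pow_eq {N : ℕ} {A : Matrix (Fin N) (Fin N) ℝ} (hA : A.IsHermitian) (k : ℕ) :
    (A ^ k).trace = ∑ i, hA.eigenvalues i ^ k := by
  set U : Matrix (Fin N) (Fin N) ℝ :=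
    (Matrix.IsHermitian.eigenvectorUnitary hA : Matrix (Fin N) (Fin N) ℝ) with hUdef
  have hU1 : U * star U = 1 :=
    (Matrix.mem_unitaryGroup_iff).mp (Matrix.IsHermitian.eigenvectorUnitary hA).2
  have hU2 : star U * U = 1 :=
    (Matrix.mem_unitaryGroup_iff').mp (Matrix.IsHermitian.eigenvectorUnitary hA).2
  set D : Matrix (Fin N) (Fin N) ℝ :=
    Matrix.diagonal (RCLike.ofReal ∘ hA.eigenvalues) with hDdef
  have key : ∀ k, A ^ k = U * D ^ k * star U := by
    intro k
    induction k with
    | zero => simp [hU1]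
    | succ k ih =>
      have hsp : A = U * D * star U := hA.spectral_theorem
      have hcan : ∀ X : Matrix (Fin N) (Fin N) ℝ, star U * (U * X) = X := fun X => by
        rw [← mul_assoc, hU2, one_mul]
      rw [pow_succ, ih, hsp]
      simp only [mul_assoc, hcan]
      rw [pow_succ]
      simp only [mul_assoc]
  rw [key k, Matrix.trace_mul_cycle, hU2, one_mul, hDdef,
    Matrix.diagonal_pow, Matrix.trace_diagonal]
  simp [RCLike.ofReal_real_eq_id]

end ChsAux

theorem chs_six_formula {n : ℕ} (G : SimpleGraph (Fin n)) [DecidableRel G.Adj]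
    (hA : (G.adjMatrix ℝ).IsHermitian) :
    chs n 6 hA.eigenvalues =
      (1 / 6) * ((G.adjMatrix ℝ) ^ 6).trace
        + (1 / 4) * (G.edgeFinset.card : ℝ) * ((G.adjMatrix ℝ) ^ 4).trace
        + (1 / 18) * (((G.adjMatrix ℝ) ^ 3).trace) ^ 2
        + (1 / 6) * (G.edgeFinset.card : ℝ) ^ 3 := by
  classical
  have h6 := (ChsAux.formulas hA.eigenvalues Finset.univ).2.2.2.2.2
  have hchs : chs n 6 hA.eigenvalues = ChsAux.H Finset.univ 6 hA.eigenvalues := rfl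
  have tk : ∀ k, ChsAux.pk k Finset.univ hA.eigenvalues = ((G.adjMatrix ℝ) ^ k).trace :=
    fun k => (ChsAux.trace_pow_eq hA k).symm
  have e1 : ChsAux.pk 1 Finset.univ hA.eigenvalues = 0 := by
    rw [tk 1, pow_one, SimpleGraph.trace_adjMatrix]
  have e2 : ChsAux.pk 2 Finset.univ hA.eigenvalues = 2 * (G.edgeFinset.card : ℝ) := by
    rw [tk 2, pow_two]
    have hd : ((G.adjMatrix ℝ) * (G.adjMatrix ℝ)).trace = ∑ i, ((G.degree i : ℝ)) := by
      rw [Matrix.trace]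
      refine Finset.sum_congr rfl fun i _ => ?_
      rw [Matrix.diag]
      exact SimpleGraph.adjMatrix_mul_self_apply_self (G := G) i
    rw [hd, ← Nat.cast_sum, SimpleGraph.sum_degrees_eq_twice_card_edges]
    push_cast
    ring
  rw [hchs, h6, e1, e2, tk 3, tk 4, tk 5, tk 6]
  ring
end

section
/- Let n be even and let λ = (λ_1 ≥ ... ≥ λ_n) be a real vector with λ_1 + ··· + λ_n = 0 and λ_1 ≥ -λ_n. Then λ is majorized by λ_1 · (1, ..., 1, -1, ..., -1) (n/2 ones followed by n/2 negative ones). -/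
/-!
Put `a = λ₁`. The `k`-th partial sum of `a · (1, …, 1, -1, …, -1)` is `k a` for `k ≤ n / 2` and
`(n - k) a` beyond. Monotonicity and `-λₙ ≤ λ₁` give `-a ≤ λᵢ ≤ a`, so the first `k` entries of `λ`
sum to at most `k a`, and, since the total is zero, to minus the last `n - k` entries, hence to at
most `(n - k) a`.
-/

/-- For vectors `x y : Fin n → ℝ` that are already sorted in decreasing order,
`MajorizesSorted x y` says that `x` majorizes `y`: every partial sum of `y` is
bounded by the corresponding partial sum of `x`, and the total sums agree. -/
def MajorizesSorted {n : ℕ} (x y : Fin n → ℝ) : Prop :=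
  (∀ k : ℕ, k ≤ n →
      ∑ i ∈ Finset.univ.filter (fun i : Fin n => (i : ℕ) < k), y i ≤
        ∑ i ∈ Finset.univ.filter (fun i : Fin n => (i : ℕ) < k), x i) ∧
    ∑ i, y i = ∑ i, x i

open Finset

theorem Finset.sum_range_ite_lt_one_neg_one (m k : ℕ) :
    ∑ i ∈ range k, (if i < m then (1 : ℝ) else -1) = 2 * (min k m : ℕ) - k := by
  induction k with
  | zero => simp
  | succ k ih =>
    rw [sum_range_succ, ih]
    split_ifs with hkm
    · rw [show min (k + 1) m = min k m + 1 by omega]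
      push_cast; ring
    · rw [show min (k + 1) m = min k m by omega]
      push_cast; ring

namespace Fin

variable {n k : ℕ}

theorem sum_filter_val_lt_eq_sum_range {M : Type*} [AddCommMonoid M] (hk : k ≤ n) (f : ℕ → M) :
    ∑ i ∈ univ.filter (fun i : Fin n => (i : ℕ) < k), f i = ∑ i ∈ range k, f i := by
  rw [sum_filter, Fin.sum_univ_eq_sum_range (fun i => if i < k then f i else 0), ← sum_filter]
  congr 1
  ext i
  simp only [mem_filter, mem_range]
  omega

theorem sum_filter_val_lt_le_mul {f : Fin n → ℝ} {a : ℝ} (hf : ∀ i, f i ≤ a) (hk : k ≤ n) :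
    ∑ i ∈ univ.filter (fun i : Fin n => (i : ℕ) < k), f i ≤ k * a := by
  calc _ ≤ #{i : Fin n | (i : ℕ) < k} • a := sum_le_card_nsmul _ _ _ fun i _ => hf i
    _ = k * a := by rw [card_filter_val_lt, min_eq_right hk, nsmul_eq_mul]

theorem sum_filter_val_lt_le_mul_of_sum_eq_zero {f : Fin n → ℝ} {a : ℝ} (hf0 : ∑ i, f i = 0)
    (hf : ∀ i, -f i ≤ a) (hk : k ≤ n) :
    ∑ i ∈ univ.filter (fun i : Fin n => (i : ℕ) < k), f i ≤ (n - k) * a := by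
  have hsplit := sum_filter_add_sum_filter_not univ (fun i : Fin n => (i : ℕ) < k) f
  have hcard := card_filter_add_card_filter_not (s := univ) (fun i : Fin n => (i : ℕ) < k)
  rw [card_filter_val_lt, min_eq_right hk, card_univ, Fintype.card_fin] at hcard
  have htail := sum_le_card_nsmul (univ.filter (fun i : Fin n => ¬ (i : ℕ) < k)) (-f ·) a
    fun i _ => hf i
  rw [sum_neg_distrib, show #{i : Fin n | ¬ (i : ℕ) < k} = n - k by omega, nsmul_eq_mul,
    Nat.cast_sub hk] at htail
  linarith

end Fin

theorem majorized_by_ones_neg_ones {n : ℕ} (hn : Even n) (hn0 : 0 < n) (lam : Fin n → ℝ)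
    (hsorted : Antitone lam) (hsum : ∑ i, lam i = 0)
    (hdom : -lam ⟨n - 1, by omega⟩ ≤ lam ⟨0, hn0⟩) :
    MajorizesSorted
      (fun i => lam ⟨0, hn0⟩ * (if (i : ℕ) < n / 2 then 1 else -1)) lam := by
  obtain ⟨m, rfl⟩ := hn
  rw [show (m + m) / 2 = m by omega]
  set a := lam ⟨0, hn0⟩
  have hle_top : ∀ i, lam i ≤ a := fun i => hsorted (Fin.le_def.mpr (Nat.zero_le _))
  have hge_bot : ∀ i, -lam i ≤ a := fun i => by
    have : lam ⟨m + m - 1, by omega⟩ ≤ lam i := hsorted (Fin.le_def.mpr (by dsimp only; omega))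
    linarith
  refine ⟨fun k hk => ?_, ?_⟩
  · rw [← mul_sum, Fin.sum_filter_val_lt_eq_sum_range hk (fun i => if i < m then (1 : ℝ) else -1),
       sum_range_ite_lt_one_neg_one]
    rcases le_total k m with hkm | hmk
    · rw [min_eq_left hkm]
      linarith [Fin.sum_filter_val_lt_le_mul hle_top hk]
    · rw [min_eq_right hmk]
      have := Fin.sum_filter_val_lt_le_mul_of_sum_eq_zero hsum hge_bot hk
      push_cast at this
      linarith
  · rw [hsum, ← mul_sum, Fin.sum_univ_eq_sum_range (fun i => if i < m then (1 : ℝ) else -1),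
      sum_range_ite_lt_one_neg_one, min_eq_right (by omega)]
    push_cast
    ring
end

section
/- For every even integer d ≥ 2, the function A ↦ (h_d(λ_1(A),...,λ_n(A)))^{1/d}, where λ_i(A) are the eigenvalues of the Hermitian matrix A, satisfies positive definiteness on n-tuples of reals: h_d(x_1,...,x_n) ≥ 0 for all real x, with equality if and only if x = 0. -/
open Finset


lemma vand2 (a b m : ℕ) (hb : b ≤ m) :
    ∑ k ∈ range (m + 1), a.choose k * b.choose k = (a + b).choose b := by
  calc ∑ k ∈ range (m + 1), a.choose k * b.choose k
      = ∑ k ∈ range (b + 1), a.choose k * b.choose k := by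
        refine (Finset.sum_subset (Finset.range_subset_range.2 (by omega)) ?_).symm
        intro k _ hk
        simp only [mem_range] at hk
        rw [Nat.choose_eq_zero_of_lt (show b < k by omega), mul_zero]
    _ = ∑ k ∈ range (b + 1), a.choose k * b.choose (b - k) := by
        refine Finset.sum_congr rfl fun k hk => ?_
        simp only [mem_range] at hk
        rw [Nat.choose_symm (by omega)]
    _ = (a + b).choose b := by
        rw [Nat.add_choose_eq, Finset.Nat.sum_antidiagonal_eq_sum_range_succ_mk]

lemma vandN {ι : Type*} [DecidableEq ι] (s : Finset ι) (c : ι → ℕ) (m : ℕ) :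
    ∑ a ∈ Finset.piAntidiag s m, ∏ i ∈ s, (c i).choose (a i) = (∑ i ∈ s, c i).choose m := by
  induction s using Finset.cons_induction generalizing m with
  | empty =>
      rcases Nat.eq_zero_or_pos m with rfl | hm
      · simp
      · rw [Finset.piAntidiag_empty_of_ne_zero (by omega)]
        simp [Nat.choose_eq_zero_of_lt hm]
  | cons i s hi ih =>
      rw [Finset.piAntidiag_cons hi, Finset.sum_disjiUnion]
      rw [Finset.sum_cons, Nat.add_choose_eq]
      apply Finset.sum_congr rfl
      intro p hp
      rw [Finset.sum_map]
      have : ∀ g ∈ Finset.piAntidiag s p.2,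
          ∏ j ∈ cons i s hi, (c j).choose ((addRightEmbedding
            fun t => if t = i then p.1 else 0) g j)
          = (c i).choose p.1 * ∏ j ∈ s, (c j).choose (g j) := by
        intro g hg
        rw [Finset.mem_piAntidiag] at hg
        rw [Finset.prod_cons]
        have hgi : g i = 0 := by
          by_contra h
          exact hi (hg.2 i h)
        congr 1
        · simp [addRightEmbedding_apply, hgi]
        · apply Finset.prod_congr rfl
          intro j hj
          have : j ≠ i := fun h => hi (h ▸ hj)
          simp [addRightEmbedding_apply, this]
      rw [Finset.sum_congr rfl this, ← Finset.mul_sum, ih]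


lemma chs_eq (n d : ℕ) (x : Fin n → ℝ) :
    chs n d x = ∑ c ∈ Finset.piAntidiag (univ : Finset (Fin n)) d, ∏ i, x i ^ c i := by
  rw [chs, ← Finset.map_sym_eq_piAntidiag, Finset.sum_map]
  apply Finset.sum_congr rfl
  intro s hs
  rw [Finset.prod_multiset_map_count]
  refine Finset.prod_subset (Finset.subset_univ _) ?_
  intro i _ hi
  rw [Multiset.count_eq_zero_of_notMem (by simpa using hi), pow_zero]


lemma claim3 (n m : ℕ) (c : Fin n → ℕ) (hc : ∑ i, c i = m + m) :
    ∑ p ∈ ((Finset.piAntidiag (univ : Finset (Fin n)) m) ×ˢ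
        (Finset.piAntidiag (univ : Finset (Fin n)) m)).filter (fun p => p.1 + p.2 = c),
      ∏ i, (c i).choose (p.1 i) = (m + m).choose m := by
  have step1 : ∑ p ∈ ((Finset.piAntidiag (univ : Finset (Fin n)) m) ×ˢ
        (Finset.piAntidiag (univ : Finset (Fin n)) m)).filter (fun p => p.1 + p.2 = c),
      ∏ i, (c i).choose (p.1 i)
      = ∑ a ∈ (Finset.piAntidiag (univ : Finset (Fin n)) m).filter (fun a => ∀ i, a i ≤ c i),
      ∏ i, (c i).choose (a i) := by
    refine Finset.sum_bij' (fun p _ => p.1) (fun a _ => (a, c - a)) ?_ ?_ ?_ ?_ ?_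
    · rintro ⟨a, b⟩ hp
      simp only [mem_filter, mem_product] at hp ⊢
      refine ⟨hp.1.1, fun i => ?_⟩
      have := congr_fun hp.2 i
      simp only [Pi.add_apply] at this
      omega
    · intro a ha
      simp only [mem_filter, mem_product, Finset.mem_piAntidiag] at ha ⊢
      obtain ⟨⟨hsum, -⟩, hle⟩ := ha
      have hsum' : ∑ i, a i = m := hsum
      refine ⟨⟨⟨hsum, fun i _ => mem_univ i⟩, ⟨?_, fun i _ => mem_univ i⟩⟩, ?_⟩
      · have : ∑ i, (c i - a i) = ∑ i, c i - ∑ i, a i :=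
          Finset.sum_tsub_distrib _ (fun i _ => hle i)
        simp only [Pi.sub_apply]
        omega
      · funext i
        simp only [Pi.add_apply, Pi.sub_apply]
        exact Nat.add_sub_cancel' (hle i)
    · rintro ⟨a, b⟩ hp
      simp only [mem_filter, mem_product] at hp
      ext i
      · rfl
      · have := congr_fun hp.2 i
        simp only [Pi.add_apply, Pi.sub_apply] at this ⊢
        omega
    · intro a ha
      rfl
    · intro p hp
      rfl
  rw [step1, Finset.sum_subset (Finset.filter_subset _ _), vandN _ c m, hc]
  · intro a ha hna
    simp only [mem_filter, ha, true_and, not_forall, not_le] at hna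
    obtain ⟨i, hi⟩ := hna
    exact Finset.prod_eq_zero (mem_univ i) (Nat.choose_eq_zero_of_lt hi)

lemma key (n m : ℕ) (x : Fin n → ℝ) :
    ((m + m).choose m : ℝ) * chs n (m + m) x
      = ∑ k ∈ Fintype.piFinset (fun _ : Fin n => Finset.range (m + 1)),
          (∑ a ∈ Finset.piAntidiag (univ : Finset (Fin n)) m,
            (∏ i, ((a i).choose (k i) : ℝ)) * ∏ i, x i ^ a i) ^ 2 := by
  classical
  set S := Finset.piAntidiag (univ : Finset (Fin n)) m with hS
  set K := Fintype.piFinset (fun _ : Fin n => Finset.range (m + 1)) with hK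
  have hbound : ∀ a ∈ S, ∀ i, a i ≤ m := by
    intro a ha i
    rw [hS, Finset.mem_piAntidiag] at ha
    have h1 : ∑ j, a j = m := ha.1
    have h2 : a i ≤ ∑ j, a j :=
      Finset.single_le_sum (f := fun j => a j) (fun j _ => Nat.zero_le _) (mem_univ i)
    omega
  have claim1 : ∀ a ∈ S, ∀ b ∈ S,
      ∑ k ∈ K, (∏ i, ((a i).choose (k i) : ℝ)) * (∏ i, ((b i).choose (k i) : ℝ))
      = ∏ i, ((a i + b i).choose (a i) : ℝ) := by
    intro a ha b hb
    have e : ∀ k : Fin n → ℕ,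
        (∏ i, ((a i).choose (k i) : ℝ)) * ∏ i, ((b i).choose (k i) : ℝ)
        = ∏ i, (((a i).choose (k i) * (b i).choose (k i) : ℕ) : ℝ) := by
      intro k
      rw [← Finset.prod_mul_distrib]
      push_cast
      rfl
    rw [Finset.sum_congr rfl fun k _ => e k, hK,
      ← Finset.prod_univ_sum (fun _ : Fin n => Finset.range (m + 1))
        (fun i j => (((a i).choose j * (b i).choose j : ℕ) : ℝ))]
    refine Finset.prod_congr rfl fun i _ => ?_
    rw [← Nat.cast_sum, vand2 _ _ _ (hbound b hb i), Nat.choose_symm_add]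
  have hRHS : ∑ k ∈ K, (∑ a ∈ S, (∏ i, ((a i).choose (k i) : ℝ)) * ∏ i, x i ^ a i) ^ 2
      = ∑ a ∈ S, ∑ b ∈ S,
          (∏ i, ((a i + b i).choose (a i) : ℝ)) * ∏ i, x i ^ (a i + b i) := by
    calc ∑ k ∈ K, (∑ a ∈ S, (∏ i, ((a i).choose (k i) : ℝ)) * ∏ i, x i ^ a i) ^ 2
        = ∑ k ∈ K, ∑ a ∈ S, ∑ b ∈ S,
            ((∏ i, ((a i).choose (k i) : ℝ)) * ∏ i, x i ^ a i) *
            ((∏ i, ((b i).choose (k i) : ℝ)) * ∏ i, x i ^ b i) := by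
          refine Finset.sum_congr rfl fun k _ => ?_
          rw [sq, Finset.sum_mul_sum]
      _ = ∑ a ∈ S, ∑ b ∈ S, ∑ k ∈ K,
            ((∏ i, ((a i).choose (k i) : ℝ)) * ∏ i, x i ^ a i) *
            ((∏ i, ((b i).choose (k i) : ℝ)) * ∏ i, x i ^ b i) := by
          rw [Finset.sum_comm]
          exact Finset.sum_congr rfl fun a _ => Finset.sum_comm
      _ = ∑ a ∈ S, ∑ b ∈ S,
            (∏ i, ((a i + b i).choose (a i) : ℝ)) * ∏ i, x i ^ (a i + b i) := by
          refine Finset.sum_congr rfl fun a ha => Finset.sum_congr rfl fun b hb => ?_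
          have e : ∀ k : Fin n → ℕ,
              ((∏ i, ((a i).choose (k i) : ℝ)) * ∏ i, x i ^ a i) *
              ((∏ i, ((b i).choose (k i) : ℝ)) * ∏ i, x i ^ b i)
              = ((∏ i, ((a i).choose (k i) : ℝ)) * (∏ i, ((b i).choose (k i) : ℝ))) *
                ((∏ i, x i ^ a i) * ∏ i, x i ^ b i) := fun k => by ring
          rw [Finset.sum_congr rfl fun k _ => e k, ← Finset.sum_mul, claim1 a ha b hb]
          congr 1
          rw [← Finset.prod_mul_distrib]
          exact Finset.prod_congr rfl fun i _ => (pow_add _ _ _).symm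
  rw [hRHS]
  calc ((m + m).choose m : ℝ) * chs n (m + m) x
      = ∑ c ∈ Finset.piAntidiag (univ : Finset (Fin n)) (m + m),
          ((m + m).choose m : ℝ) * ∏ i, x i ^ c i := by
        rw [chs_eq, Finset.mul_sum]
    _ = ∑ c ∈ Finset.piAntidiag (univ : Finset (Fin n)) (m + m),
          ∑ p ∈ (S ×ˢ S).filter (fun p => p.1 + p.2 = c),
            (∏ i, ((p.1 i + p.2 i).choose (p.1 i) : ℝ)) * ∏ i, x i ^ (p.1 i + p.2 i) := by
        refine Finset.sum_congr rfl fun c hc => ?_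
        rw [Finset.mem_piAntidiag] at hc
        have hc' : ∑ i, c i = m + m := hc.1
        have e : ∀ p ∈ (S ×ˢ S).filter (fun p => p.1 + p.2 = c),
            (∏ i, ((p.1 i + p.2 i).choose (p.1 i) : ℝ)) * ∏ i, x i ^ (p.1 i + p.2 i)
            = (∏ i, ((c i).choose (p.1 i) : ℝ)) * ∏ i, x i ^ c i := by
          intro p hp
          have h2 := (Finset.mem_filter.1 hp).2
          have h3 : ∀ i, p.1 i + p.2 i = c i := fun i => by rw [← h2]; rfl
          simp_rw [h3]
        rw [Finset.sum_congr rfl e, ← Finset.sum_mul]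
        congr 1
        have h4 : ∑ p ∈ (S ×ˢ S).filter (fun p => p.1 + p.2 = c),
            ∏ i, ((c i).choose (p.1 i) : ℝ)
            = ((∑ p ∈ (S ×ˢ S).filter (fun p => p.1 + p.2 = c),
                ∏ i, (c i).choose (p.1 i) : ℕ) : ℝ) := by
          push_cast
          rfl
        rw [h4, claim3 n m c hc']
    _ = ∑ p ∈ S ×ˢ S,
          (∏ i, ((p.1 i + p.2 i).choose (p.1 i) : ℝ)) * ∏ i, x i ^ (p.1 i + p.2 i) := by
        refine Finset.sum_fiberwise_of_maps_to ?_ _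
        rintro ⟨a, b⟩ hp
        rw [Finset.mem_product, hS, Finset.mem_piAntidiag, Finset.mem_piAntidiag] at hp
        rw [Finset.mem_piAntidiag]
        refine ⟨?_, fun i _ => mem_univ i⟩
        have h1 : ∑ i, a i = m := hp.1.1
        have h2 : ∑ i, b i = m := hp.2.1
        have : ∑ i, (a i + b i) = m + m := by rw [Finset.sum_add_distrib, h1, h2]
        exact this
    _ = ∑ a ∈ S, ∑ b ∈ S,
          (∏ i, ((a i + b i).choose (a i) : ℝ)) * ∏ i, x i ^ (a i + b i) := by
        rw [Finset.sum_product]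

theorem chs_positive_definite (n d : ℕ) (hd : 2 ≤ d) (hdeven : Even d) (x : Fin n → ℝ) :
    0 ≤ chs n d x ∧ (chs n d x = 0 ↔ x = 0) := by
  obtain ⟨m, rfl⟩ := hdeven
  have hm : 1 ≤ m := by omega
  have hC : (0 : ℝ) < ((m + m).choose m : ℝ) := by
    exact_mod_cast Nat.choose_pos (Nat.le_add_right m m)
  have hkey := key n m x
  have hnn : 0 ≤ ((m + m).choose m : ℝ) * chs n (m + m) x := by
    rw [hkey]
    exact Finset.sum_nonneg fun k _ => sq_nonneg _
  have h0 : 0 ≤ chs n (m + m) x := by nlinarith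
  refine ⟨h0, ?_, ?_⟩
  · intro hzero
    have hsum0 : ∑ k ∈ Fintype.piFinset (fun _ : Fin n => Finset.range (m + 1)),
        (∑ a ∈ Finset.piAntidiag (univ : Finset (Fin n)) m,
          (∏ i, ((a i).choose (k i) : ℝ)) * ∏ i, x i ^ a i) ^ 2 = 0 := by
      rw [← hkey, hzero, mul_zero]
    have hP : ∀ k ∈ Fintype.piFinset (fun _ : Fin n => Finset.range (m + 1)),
        ∑ a ∈ Finset.piAntidiag (univ : Finset (Fin n)) m,
          (∏ i, ((a i).choose (k i) : ℝ)) * ∏ i, x i ^ a i = 0 := by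
      intro k hk
      have h := (Finset.sum_eq_zero_iff_of_nonneg fun k _ => sq_nonneg _).1 hsum0 k hk
      exact (pow_eq_zero_iff two_ne_zero).1 h
    funext j
    have hkj : (fun i => if i = j then m else 0) ∈
        Fintype.piFinset (fun _ : Fin n => Finset.range (m + 1)) := by
      rw [Fintype.mem_piFinset]
      intro i
      rw [Finset.mem_range]
      split <;> omega
    have hPj := hP _ hkj
    have ha0 : (fun i => if i = j then m else 0) ∈
        Finset.piAntidiag (univ : Finset (Fin n)) m := by
      rw [Finset.mem_piAntidiag]
      refine ⟨?_, fun i _ => mem_univ i⟩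
      simp
    have hsingle : ∑ a ∈ Finset.piAntidiag (univ : Finset (Fin n)) m,
        (∏ i, ((a i).choose (if i = j then m else 0) : ℝ)) * ∏ i, x i ^ a i
        = x j ^ m := by
      rw [Finset.sum_eq_single_of_mem _ ha0]
      · have e1 : ∏ i, (((if i = j then m else 0 : ℕ)).choose (if i = j then m else 0) : ℝ)
            = 1 := by
          refine Finset.prod_eq_one fun i _ => ?_
          split <;> simp
        have e2 : ∏ i, x i ^ (if i = j then m else 0 : ℕ) = x j ^ m := by
          rw [Finset.prod_eq_single_of_mem j (mem_univ j)]
          · simp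
          · intro i _ hij
            simp [hij]
        rw [e1, e2, one_mul]
      · intro a ha hne
        rw [Finset.mem_piAntidiag] at ha
        have hsum : ∑ i, a i = m := ha.1
        by_cases haj : a j = m
        · exfalso
          apply hne
          funext i
          by_cases hij : i = j
          · simp [hij, haj]
          · show a i = if i = j then m else 0
            rw [if_neg hij]
            have herase : a j + ∑ i ∈ Finset.univ.erase j, a i = ∑ i, a i :=
              Finset.add_sum_erase _ _ (mem_univ j)
            have hz : ∑ i ∈ Finset.univ.erase j, a i = 0 := by omega
            exact (Finset.sum_eq_zero_iff).1 hz i (Finset.mem_erase.2 ⟨hij, mem_univ i⟩)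
        · have hlt : a j < m := by
            have h2 : a j ≤ ∑ i, a i :=
              Finset.single_le_sum (f := fun i => a i) (fun i _ => Nat.zero_le _) (mem_univ j)
            omega
          have : (∏ i, ((a i).choose (if i = j then m else 0) : ℝ)) = 0 := by
            refine Finset.prod_eq_zero (mem_univ j) ?_
            simp [Nat.choose_eq_zero_of_lt hlt]
          rw [this, zero_mul]
    rw [hsingle] at hPj
    exact pow_eq_zero_iff (by omega) |>.1 hPj
  · intro hx
    rw [hx, chs_eq]
    refine Finset.sum_eq_zero fun c hc => ?_
    rw [Finset.mem_piAntidiag] at hc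
    have h1 : ∑ i, c i = m + m := hc.1
    have hex : ∃ i, c i ≠ 0 := by
      by_contra h
      push_neg at h
      rw [Finset.sum_congr rfl fun i _ => h i] at h1
      simp at h1
      omega
    obtain ⟨i, hi⟩ := hex
    refine Finset.prod_eq_zero (mem_univ i) ?_
    simp [zero_pow hi]
end
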